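/- arXiv:2212.11650 — 8 statements merged into one kernel-verified Lean document; each statement's English description precedes it below -/
import Mathlib

section
/- Let ℱ ⊆ ([n] choose ℓ) be an intersecting family. If there exist F, F' ∈ ℱ with x ∈ F ∩ F' and |F ∩ F'| ≥ 2, then the number of sets of ℱ containing x is at least γ_{ℓ-1}(ℱ) + 2. -/
/-!
Let `S = A \ {x}`, a set of size `ℓ - 1`. Every member of the intersecting family that misses `S`
still meets `A`, hence contains `x`. Neither `A` nor `B` misses `S`, since both contain a second
common point `y ≠ x`; so the sets containing `x` include `A`, `B` and at least `γ` further sets.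
-/

namespace Finset

variable {α : Type*} [DecidableEq α]

theorem mem_of_inter_erase_eq_empty {A C : Finset α} {x : α} (hCA : (C ∩ A).Nonempty)
    (hC : C ∩ A.erase x = ∅) : x ∈ C := by
  obtain ⟨z, hz⟩ := hCA
  rw [mem_inter] at hz
  by_contra hxC
  have hzx : z ≠ x := by rintro rfl; exact hxC hz.1
  have : z ∈ C ∩ A.erase x := mem_inter.2 ⟨hz.1, mem_erase.2 ⟨hzx, hz.2⟩⟩
  simp [hC] at this

theorem inter_erase_ne_empty {A C : Finset α} {x y : α} (hyC : y ∈ C) (hyA : y ∈ A)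
    (hyx : y ≠ x) : C ∩ A.erase x ≠ ∅ :=
  nonempty_iff_ne_empty.1 ⟨y, mem_inter.2 ⟨hyC, mem_erase.2 ⟨hyx, hyA⟩⟩⟩

theorem card_add_two_le_of_subset {β : Type*} [DecidableEq β] {s t : Finset β} {a b : β}
    (hst : s ⊆ t) (ha : a ∈ t) (hb : b ∈ t) (hab : a ≠ b) (has : a ∉ s) (hbs : b ∉ s) :
    s.card + 2 ≤ t.card := by
  have hsub : insert a (insert b s) ⊆ t := insert_subset ha (insert_subset hb hst)
  have hcard : (insert a (insert b s)).card = s.card + 2 := by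
    rw [card_insert_of_notMem (by simp [hab, has]), card_insert_of_notMem hbs]
  exact hcard ▸ card_le_card hsub

theorem filter_inter_erase_eq_empty_subset {F : Finset (Finset α)}
    (hint : ∀ A ∈ F, ∀ B ∈ F, (A ∩ B).Nonempty) {A : Finset α} (hA : A ∈ F) (x : α) :
    F.filter (fun C => C ∩ A.erase x = ∅) ⊆ F.filter (fun C => x ∈ C) := by
  intro C hC
  rw [mem_filter] at hC ⊢
  exact ⟨hC.1, mem_of_inter_erase_eq_empty (hint C hC.1 A hA) hC.2⟩

end Finset

open Finset in
theorem stmt_2_general (n ℓ : ℕ) (F : Finset (Finset (Fin n)))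
    (huniform : ∀ A ∈ F, A.card = ℓ)
    (hint : ∀ A ∈ F, ∀ B ∈ F, (A ∩ B).Nonempty)
    (x : Fin n)
    (A B : Finset (Fin n)) (hA : A ∈ F) (hB : B ∈ F) (hAB : A ≠ B)
    (hxAB : x ∈ A ∩ B) (hcap : 2 ≤ (A ∩ B).card)
    (γ : ℕ)
    (hγ : IsLeast {m : ℕ | ∃ S : Finset (Fin n), S.card = ℓ - 1 ∧
      (F.filter (fun C => C ∩ S = ∅)).card = m} γ) :
    γ + 2 ≤ (F.filter (fun C => x ∈ C)).card := by
  obtain ⟨hxA, hxB⟩ := mem_inter.1 hxAB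
  obtain ⟨y, hy, hyx⟩ : ∃ y ∈ A ∩ B, y ≠ x := exists_mem_ne (by omega) x
  obtain ⟨hyA, hyB⟩ := mem_inter.1 hy
  have hγS : γ ≤ (F.filter (fun C => C ∩ A.erase x = ∅)).card :=
    hγ.2 ⟨A.erase x, by rw [card_erase_of_mem hxA, huniform A hA], rfl⟩
  have hcount := card_add_two_le_of_subset (filter_inter_erase_eq_empty_subset hint hA x)
    (mem_filter.2 ⟨hA, hxA⟩) (mem_filter.2 ⟨hB, hxB⟩) hAB
    (fun h => inter_erase_ne_empty hyA hyA hyx (mem_filter.1 h).2)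
    (fun h => inter_erase_ne_empty hyB hyA hyx (mem_filter.1 h).2)
  omega

theorem stmt_2 (n ℓ : ℕ) (hℓ : 1 ≤ ℓ) (F : Finset (Finset (Fin n)))
    (huniform : ∀ A ∈ F, A.card = ℓ)
    (hint : ∀ A ∈ F, ∀ B ∈ F, (A ∩ B).Nonempty)
    (x : Fin n)
    (A B : Finset (Fin n)) (hA : A ∈ F) (hB : B ∈ F) (hAB : A ≠ B)
    (hxAB : x ∈ A ∩ B) (hcap : 2 ≤ (A ∩ B).card)
    (γ : ℕ)
    (hγ : IsLeast {m : ℕ | ∃ S : Finset (Fin n), S.card = ℓ - 1 ∧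
      (F.filter (fun C => C ∩ S = ∅)).card = m} γ) :
    γ + 2 ≤ (F.filter (fun C => x ∈ C)).card :=
  stmt_2_general n ℓ F huniform hint x A B hA hB hAB hxAB hcap γ hγ
end

section
/- Let 𝒯 ⊆ ([n] choose 3) be a nonempty intersecting family in which every two distinct members intersect in exactly one element, and suppose every element x lying in some member of 𝒯 lies in exactly 3 members, and for every pair S contained in a member of 𝒯 there are at least 2 members of 𝒯 disjoint from S. Then 𝒯 is isomorphic to the family of the seven lines of the Fano plane. -/
/-- The seven lines of the Fano plane. -/
def fanoLines : Finset (Finset ℕ) :=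
  {{1, 2, 3}, {1, 4, 5}, {1, 6, 7}, {2, 4, 6}, {2, 5, 7}, {3, 5, 6}, {3, 4, 7}}

/-!
Fix a line `{p₁, p₂, p₃}`. Besides it, two lines `L, M` pass through `p₁` and two lines `B, C`
through `p₂`; each of `B, C` meets `L` and `M` away from `p₁`, and these four meeting points
`p₄, …, p₇` label `L, M, B, C` as `{p₁,p₄,p₅}, {p₁,p₆,p₇}, {p₂,p₄,p₆}, {p₂,p₅,p₇}`. A line through
`p₃` other than the first one meets `L` and `M` in one point each, but not in two points of `B`
or two points of `C`, so it is `{p₃,p₄,p₇}` or `{p₃,p₅,p₆}`. Every line meets `{p₁, p₂, p₃}`,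
hence these are all the lines. The labelling is injective because in the Fano plane any two
points lie on a common line, whose image still has three points.
-/

open Finset

theorem card_of_mem_fanoLines : ∀ ℓ ∈ fanoLines, #ℓ = 3 := by
  decide

theorem subset_Icc_of_mem_fanoLines : ∀ ℓ ∈ fanoLines, ℓ ⊆ Icc 1 7 := by
  decide

theorem exists_mem_fanoLines_of_mem_Icc :
    ∀ i ∈ Icc 1 7, ∀ j ∈ Icc 1 7, ∃ ℓ ∈ fanoLines, i ∈ ℓ ∧ j ∈ ℓ := by
  decide

theorem injOn_Icc_of_card_image_fanoLines {β : Type*} [DecidableEq β] {g : ℕ → β}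
    (hg : ∀ ℓ ∈ fanoLines, #(ℓ.image g) = 3) : Set.InjOn g (Icc 1 7 : Finset ℕ) := by
  intro i hi j hj hij
  obtain ⟨ℓ, hℓ, hiℓ, hjℓ⟩ := exists_mem_fanoLines_of_mem_Icc i hi j hj
  have hcard : #(ℓ.image g) = #ℓ := by rw [hg ℓ hℓ, card_of_mem_fanoLines ℓ hℓ]
  exact card_image_iff.mp hcard hiℓ hjℓ hij

theorem Set.InjOn.exists_injective_eqOn {s : Finset ℕ} {g : ℕ → ℕ} (hg : Set.InjOn g s) :
    ∃ f : ℕ → ℕ, Function.Injective f ∧ Set.EqOn f g s := by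
  refine ⟨fun n => if n ∈ s then g n else s.sup g + 1 + n, fun m n hmn => ?_, fun n hn => if_pos hn⟩
  have hle : ∀ n ∈ s, g n ≤ s.sup g := fun n hn => le_sup hn
  by_cases hm : m ∈ s <;> by_cases hn : n ∈ s <;> simp only [hm, hn, if_true, if_false] at hmn
  · exact hg hm hn hmn
  · have := hle m hm; omega
  · have := hle n hn; omega
  · omega

section LinearTripleSystem

variable {α : Type*} [DecidableEq α] {T : Finset (Finset α)}

theorem eq_of_mem_of_mem_of_ne (hone : ∀ A ∈ T, ∀ B ∈ T, A ≠ B → #(A ∩ B) = 1)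
    {A B : Finset α} (hA : A ∈ T) (hB : B ∈ T) (hAB : A ≠ B) {x y : α}
    (hxA : x ∈ A) (hxB : x ∈ B) (hyA : y ∈ A) (hyB : y ∈ B) : x = y :=
  card_le_one.mp (hone A hA B hB hAB).le x (mem_inter.2 ⟨hxA, hxB⟩) y (mem_inter.2 ⟨hyA, hyB⟩)

theorem notMem_of_mem_of_ne (hone : ∀ A ∈ T, ∀ B ∈ T, A ≠ B → #(A ∩ B) = 1)
    {A B : Finset α} (hA : A ∈ T) (hB : B ∈ T) (hAB : A ≠ B) {x y : α}
    (hxA : x ∈ A) (hxB : x ∈ B) (hyA : y ∈ A) (hyx : y ≠ x) : y ∉ B :=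
  fun hyB => hyx (eq_of_mem_of_mem_of_ne hone hA hB hAB hyA hyB hxA hxB)

theorem exists_mem_mem (huniform : ∀ A ∈ T, #A = 3)
    (hone : ∀ A ∈ T, ∀ B ∈ T, A ≠ B → #(A ∩ B) = 1) {A B : Finset α} (hA : A ∈ T)
    (hB : B ∈ T) : ∃ x, x ∈ A ∧ x ∈ B := by
  obtain rfl | hAB := eq_or_ne A B
  · obtain ⟨x, hx⟩ := card_pos.mp (by rw [huniform A hA]; norm_num)
    exact ⟨x, hx, hx⟩
  · obtain ⟨x, hx⟩ := card_pos.mp (by rw [hone A hA B hB hAB]; norm_num)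
    exact ⟨x, mem_inter.mp hx⟩

theorem eq_triple_of_mem {A : Finset α} (hA : #A = 3) {x y z : α} (hx : x ∈ A) (hy : y ∈ A)
    (hz : z ∈ A) (hxy : x ≠ y) (hxz : x ≠ z) (hyz : y ≠ z) : A = {x, y, z} :=
  (eq_of_subset_of_card_le (by simp [insert_subset_iff, hx, hy, hz])
    (by rw [hA, card_eq_three.mpr ⟨x, y, z, hxy, hxz, hyz, rfl⟩])).symm

theorem exists_other_lines_through {x : α} (hx : #(T.filter (x ∈ ·)) = 3) {A : Finset α}
    (hA : A ∈ T) (hxA : x ∈ A) :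
    ∃ B ∈ T, ∃ C ∈ T, x ∈ B ∧ x ∈ C ∧ A ≠ B ∧ A ≠ C ∧ B ≠ C ∧
      ∀ D ∈ T, x ∈ D → D = A ∨ D = B ∨ D = C := by
  have hcard : #((T.filter (x ∈ ·)).erase A) = 2 := by
    rw [card_erase_of_mem (mem_filter.2 ⟨hA, hxA⟩), hx]
  obtain ⟨B, C, hBC, hpair⟩ := card_eq_two.mp hcard
  have hmem : ∀ D, D ≠ A ∧ D ∈ T ∧ x ∈ D ↔ D = B ∨ D = C := fun D => by
    simpa [and_assoc] using congrArg (D ∈ ·) hpair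
  obtain ⟨hBA, hB, hxB⟩ := (hmem B).2 (.inl rfl)
  obtain ⟨hCA, hC, hxC⟩ := (hmem C).2 (.inr rfl)
  refine ⟨B, hB, C, hC, hxB, hxC, hBA.symm, hCA.symm, hBC, fun D hD hxD => ?_⟩
  obtain rfl | hDA := eq_or_ne D A
  · exact .inl rfl
  · exact .inr ((hmem D).1 ⟨hDA, hD, hxD⟩)

theorem exists_eq_triple_of_mem_of_mem (huniform : ∀ A ∈ T, #A = 3)
    (hone : ∀ A ∈ T, ∀ B ∈ T, A ≠ B → #(A ∩ B) = 1) {L B C : Finset α} {p q : α}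
    (hL : L ∈ T) (hpL : p ∈ L) (hB : B ∈ T) (hC : C ∈ T) (hBC : B ≠ C) (hqB : q ∈ B)
    (hqC : q ∈ C) (hqL : q ∉ L) (hpB : p ∉ B) (hpC : p ∉ C) :
    ∃ a b, a ∈ B ∧ b ∈ C ∧ L = {p, a, b} := by
  obtain ⟨a, haB, haL⟩ := exists_mem_mem huniform hone hB hL
  obtain ⟨b, hbC, hbL⟩ := exists_mem_mem huniform hone hC hL
  have hab : a ≠ b := by
    rintro rfl
    exact hqL (eq_of_mem_of_mem_of_ne hone hB hC hBC haB hbC hqB hqC ▸ haL)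
  exact ⟨a, b, haB, hbC, eq_triple_of_mem (huniform L hL) hpL haL hbL
    (ne_of_mem_of_not_mem haB hpB).symm (ne_of_mem_of_not_mem hbC hpC).symm hab⟩

theorem exists_grid (huniform : ∀ A ∈ T, #A = 3)
    (hone : ∀ A ∈ T, ∀ B ∈ T, A ≠ B → #(A ∩ B) = 1) {L M B C : Finset α} {p q : α}
    (hL : L ∈ T) (hM : M ∈ T) (hLM : L ≠ M) (hpL : p ∈ L) (hpM : p ∈ M)
    (hB : B ∈ T) (hC : C ∈ T) (hBC : B ≠ C) (hqB : q ∈ B) (hqC : q ∈ C)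
    (hqL : q ∉ L) (hqM : q ∉ M) (hpB : p ∉ B) (hpC : p ∉ C) :
    ∃ a b c d, L = {p, a, b} ∧ M = {p, c, d} ∧ B = {q, a, c} ∧ C = {q, b, d} := by
  obtain ⟨a, b, haB, hbC, rfl⟩ :=
    exists_eq_triple_of_mem_of_mem huniform hone hL hpL hB hC hBC hqB hqC hqL hpB hpC
  obtain ⟨c, d, hcB, hdC, rfl⟩ :=
    exists_eq_triple_of_mem_of_mem huniform hone hM hpM hB hC hBC hqB hqC hqM hpB hpC
  have meet_eq_p : ∀ {x y}, x ∈ ({p, a, b} : Finset α) → y ∈ ({p, c, d} : Finset α) → x = y →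
      x = p := fun hx hy hxy =>
    eq_of_mem_of_mem_of_ne hone hL hM hLM hx (hxy ▸ hy) (by simp) (by simp)
  have hac : a ≠ c := fun h => hpB (meet_eq_p (by simp) (by simp) h ▸ haB)
  have hbd : b ≠ d := fun h => hpC (meet_eq_p (by simp) (by simp) h ▸ hbC)
  refine ⟨a, b, c, d, rfl, rfl, ?_, ?_⟩
  · exact eq_triple_of_mem (huniform B hB) hqB haB hcB (ne_of_mem_of_not_mem (by simp) hqL).symm
      (ne_of_mem_of_not_mem (by simp) hqM).symm hac
  · exact eq_triple_of_mem (huniform C hC) hqC hbC hdC (ne_of_mem_of_not_mem (by simp) hqL).symm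
      (ne_of_mem_of_not_mem (by simp) hqM).symm hbd

theorem eq_triple_or_eq_triple (huniform : ∀ A ∈ T, #A = 3)
    (hone : ∀ A ∈ T, ∀ B ∈ T, A ≠ B → #(A ∩ B) = 1) {p q r a b c d : α}
    (hL : {p, a, b} ∈ T) (hM : {p, c, d} ∈ T) (hLM : ({p, a, b} : Finset α) ≠ {p, c, d})
    (hB : {q, a, c} ∈ T) (hC : {q, b, d} ∈ T) {D : Finset α} (hD : D ∈ T) (hrD : r ∈ D)
    (hpD : p ∉ D) (hrL : r ∉ ({p, a, b} : Finset α)) (hrM : r ∉ ({p, c, d} : Finset α))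
    (hrB : r ∉ ({q, a, c} : Finset α)) (hrC : r ∉ ({q, b, d} : Finset α)) :
    D = {r, a, d} ∨ D = {r, b, c} := by
  obtain ⟨x, hxD, hxL⟩ := exists_mem_mem huniform hone hD hL
  obtain ⟨y, hyD, hyM⟩ := exists_mem_mem huniform hone hD hM
  have hxy : x ≠ y := fun h =>
    hpD (eq_of_mem_of_mem_of_ne hone hL hM hLM hxL (h ▸ hyM) (y := p) (by simp) (by simp) ▸ hxD)
  have hDxy : D = {r, x, y} := eq_triple_of_mem (huniform D hD) hrD hxD hyD
    (ne_of_mem_of_not_mem hxL hrL).symm (ne_of_mem_of_not_mem hyM hrM).symm hxy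
  have hDB : D ≠ {q, a, c} := ne_of_mem_of_not_mem' hrD hrB
  have hDC : D ≠ {q, b, d} := ne_of_mem_of_not_mem' hrD hrC
  have hxp : x ≠ p := ne_of_mem_of_not_mem hxD hpD
  have hyp : y ≠ p := ne_of_mem_of_not_mem hyD hpD
  simp only [mem_insert, mem_singleton, hxp, hyp, false_or] at hxL hyM
  rcases hxL with rfl | rfl <;> rcases hyM with rfl | rfl
  · exact absurd (eq_of_mem_of_mem_of_ne hone hD hB hDB hxD (by simp) hyD (by simp)) hxy
  · exact .inl hDxy
  · exact .inr hDxy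
  · exact absurd (eq_of_mem_of_mem_of_ne hone hD hC hDC hxD (by simp) hyD (by simp)) hxy

theorem subset_of_forall_mem_of_mem (huniform : ∀ A ∈ T, #A = 3)
    (hone : ∀ A ∈ T, ∀ B ∈ T, A ≠ B → #(A ∩ B) = 1) {A : Finset α} (hA : A ∈ T)
    {S : Finset (Finset α)} (hS : ∀ x ∈ A, ∀ X ∈ T, x ∈ X → X ∈ S) : T ⊆ S := fun X hX =>
  let ⟨x, hxA, hxX⟩ := exists_mem_mem huniform hone hA hX
  hS x hxA X hX hxX

theorem exists_eq_image_fanoLines (huniform : ∀ A ∈ T, #A = 3)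
    (hone : ∀ A ∈ T, ∀ B ∈ T, A ≠ B → #(A ∩ B) = 1)
    (hdeg : ∀ x, (∃ A ∈ T, x ∈ A) → #(T.filter (x ∈ ·)) = 3) (hne : T.Nonempty) :
    ∃ g : ℕ → α, T = fanoLines.image (image g) := by
  obtain ⟨A, hA⟩ := hne
  obtain ⟨p1, p2, p3, h12, h13, h23, rfl⟩ := card_eq_three.mp (huniform A hA)
  have lines_through (x) (hx : x ∈ ({p1, p2, p3} : Finset α)) :=
    exists_other_lines_through (hdeg x ⟨_, hA, hx⟩) hA hx
  obtain ⟨L, hL, M, hM, hp1L, hp1M, hAL, hAM, hLM, hlines1⟩ := lines_through p1 (by simp)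
  obtain ⟨B, hB, C, hC, hp2B, hp2C, hAB, hAC, hBC, hlines2⟩ := lines_through p2 (by simp)
  obtain ⟨D, hD, E, hE, hp3D, hp3E, hAD, hAE, hDE, hlines3⟩ := lines_through p3 (by simp)
  have notMem := @notMem_of_mem_of_ne α _ T hone
  have hp2L := notMem hA hL hAL (by simp) hp1L (by simp) h12.symm
  have hp2M := notMem hA hM hAM (by simp) hp1M (by simp) h12.symm
  have hp1B := notMem hA hB hAB (by simp) hp2B (by simp) h12
  have hp1C := notMem hA hC hAC (by simp) hp2C (by simp) h12
  obtain ⟨p4, p5, p6, p7, rfl, rfl, rfl, rfl⟩ :=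
    exists_grid huniform hone hL hM hLM hp1L hp1M hB hC hBC hp2B hp2C hp2L hp2M hp1B hp1C
  have third_line {X : Finset α} (hX : X ∈ T) (hp3X : p3 ∈ X) (hAX : {p1, p2, p3} ≠ X) :=
    eq_triple_or_eq_triple huniform hone hL hM hLM hB hC hX hp3X
      (notMem hA hX hAX (by simp) hp3X (by simp) h13)
      (notMem hA hL hAL (by simp) hp1L (by simp) h13.symm)
      (notMem hA hM hAM (by simp) hp1M (by simp) h13.symm)
      (notMem hA hB hAB (by simp) hp2B (by simp) h23.symm)
      (notMem hA hC hAC (by simp) hp2C (by simp) h23.symm)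
  have hDE_eq : ({D, E} : Finset (Finset α)) = {{p3, p5, p6}, {p3, p4, p7}} := by
    rcases third_line hD hp3D hAD with rfl | rfl <;> rcases third_line hE hp3E hAE with rfl | rfl
    all_goals first | exact absurd rfl hDE | rfl | exact pair_comm _ _
  have hT : T = {{p1, p2, p3}, {p1, p4, p5}, {p1, p6, p7}, {p2, p4, p6}, {p2, p5, p7}, D, E} := by
    refine (subset_of_forall_mem_of_mem huniform hone hA fun x hx X hX hxX => ?_).antisymm
      (by simp [insert_subset_iff, hA, hL, hM, hB, hC, hD, hE])
    simp only [mem_insert, mem_singleton] at hx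
    rcases hx with rfl | rfl | rfl
    · rcases hlines1 X hX hxX with rfl | rfl | rfl <;> simp
    · rcases hlines2 X hX hxX with rfl | rfl | rfl <;> simp
    · rcases hlines3 X hX hxX with rfl | rfl | rfl <;> simp
  refine ⟨fun n => [p1, p2, p3, p4, p5, p6, p7].getD (n - 1) p1, ?_⟩
  rw [hT, hDE_eq]
  simp [fanoLines]

end LinearTripleSystem

theorem stmt_3_general (T : Finset (Finset ℕ))
    (huniform : ∀ A ∈ T, A.card = 3)
    (hne : T.Nonempty)
    (hone : ∀ A ∈ T, ∀ B ∈ T, A ≠ B → (A ∩ B).card = 1)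
    (hdeg : ∀ x : ℕ, (∃ A ∈ T, x ∈ A) → (T.filter (fun A => x ∈ A)).card = 3) :
    ∃ f : ℕ → ℕ, Function.Injective f ∧ T = fanoLines.image (Finset.image f) := by
  obtain ⟨g, hT⟩ := exists_eq_image_fanoLines huniform hone hdeg hne
  have hg : Set.InjOn g (Icc 1 7 : Finset ℕ) := injOn_Icc_of_card_image_fanoLines fun ℓ hℓ =>
    huniform _ (hT ▸ mem_image_of_mem _ hℓ)
  obtain ⟨f, hf, hfg⟩ := hg.exists_injective_eqOn
  refine ⟨f, hf, hT.trans (image_congr fun ℓ hℓ => ?_)⟩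
  exact image_congr (hfg.mono (coe_subset.2 (subset_Icc_of_mem_fanoLines ℓ hℓ))) |>.symm

theorem stmt_3 (T : Finset (Finset ℕ))
    (huniform : ∀ A ∈ T, A.card = 3)
    (hne : T.Nonempty)
    (hint : ∀ A ∈ T, ∀ B ∈ T, (A ∩ B).Nonempty)
    (hone : ∀ A ∈ T, ∀ B ∈ T, A ≠ B → (A ∩ B).card = 1)
    (hdeg : ∀ x : ℕ, (∃ A ∈ T, x ∈ A) → (T.filter (fun A => x ∈ A)).card = 3)
    (hpair : ∀ S : Finset ℕ, S.card = 2 → (∃ A ∈ T, S ⊆ A) →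
      2 ≤ (T.filter (fun A => A ∩ S = ∅)).card) :
    ∃ f : ℕ → ℕ, Function.Injective f ∧ T = fanoLines.image (Finset.image f) :=
  stmt_3_general T huniform hne hone hdeg
end

section
/- Let 𝒯 ⊆ ([n] choose 3) be an intersecting family with covering number τ(𝒯) = 3 (i.e., no 2-element set meets all members). If for some pair {x,y} at most one member of 𝒯 avoids both x and y, then some element v satisfies: the number of members of 𝒯 avoiding v is at most 4. -/
/-!
Let `A₀` be the member avoiding `x` and `y`: it exists because `τ = 3` and is unique by
hypothesis. Every other member contains exactly one of `x`, `y`, and is determined by that letter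
and its trace on `A₀`; members through different letters cannot have complementary traces, or
they would be disjoint. So the traces of the members through `x` and the complements of the
traces of the members through `y` are distinct nonempty proper subsets of `A₀`, at most six in
all, and one of `x`, `y` is missed by `A₀` and at most three further members.
-/

open Finset

variable {α : Type*} [DecidableEq α]

lemma Finset.eq_triple_of_card_eq_three {s : Finset α} (hs : #s = 3) {a b c : α}
    (ha : a ∈ s) (hb : b ∈ s) (hc : c ∈ s) (hab : a ≠ b) (hac : a ≠ c) (hbc : b ≠ c) :
    s = {a, b, c} :=
  (eq_of_subset_of_card_le (by simp [insert_subset_iff, ha, hb, hc])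
    (by rw [hs, card_eq_three.2 ⟨a, b, c, hab, hac, hbc, rfl⟩])).symm

lemma Finset.sdiff_eq_singleton_of_card_eq {A B : Finset α} {u : α} (hu : u ∈ A \ B)
    (h : #A = #(A ∩ B) + 1) : A \ B = {u} := by
  have hcard : #(A \ B) ≤ 1 := by have := card_sdiff_add_card_inter A B; omega
  exact eq_singleton_iff_unique_mem.2 ⟨hu, fun w hw => card_le_one.1 hcard w hw u hu⟩

lemma Finset.sdiff_mem_Ioo_empty {s t : Finset α} (ht : t ∈ Ioo ∅ s) : s \ t ∈ Ioo ∅ s := by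
  obtain ⟨hne, hts⟩ := mem_Ioo.1 ht
  have hsdiff : (s \ t).Nonempty := sdiff_nonempty.2 (not_subset_of_ssubset hts)
  exact mem_Ioo.2 ⟨empty_ssubset.2 hsdiff, sdiff_ssubset hts.subset (empty_ssubset.1 hne)⟩

def separating (T : Finset (Finset α)) (u v : α) : Finset (Finset α) :=
  T.filter fun A => u ∈ A ∧ v ∉ A

section

variable {T : Finset (Finset α)} {A₀ A B : Finset α} {u v : α}

lemma mem_separating : A ∈ separating T u v ↔ A ∈ T ∧ u ∈ A ∧ v ∉ A := mem_filter

lemma card_filter_notMem_le_card_separating_add_one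
    (huniq : ∀ C ∈ T, u ∉ C → v ∉ C → C = A₀) :
    #(T.filter (v ∉ ·)) ≤ #(separating T u v) + 1 :=
  calc #(T.filter (v ∉ ·)) ≤ #(insert A₀ (separating T u v)) := card_le_card fun C hC => by
        obtain ⟨hCT, hvC⟩ := mem_filter.1 hC
        by_cases huC : u ∈ C
        · exact mem_insert_of_mem (mem_separating.2 ⟨hCT, huC, hvC⟩)
        · exact mem_insert.2 (Or.inl (huniq C hCT huC hvC))
    _ ≤ _ := card_insert_le _ _

lemma inter_ssubset_of_mem_separating (hT3 : ∀ A ∈ T, #A = 3) (hA₀ : A₀ ∈ T) (hu₀ : u ∉ A₀)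
    (hA : A ∈ separating T u v) : A ∩ A₀ ⊂ A₀ := by
  obtain ⟨hAT, huA, -⟩ := mem_separating.1 hA
  refine inter_subset_right.ssubset_of_ne fun h => hu₀ ?_
  have : A₀ = A := eq_of_subset_of_card_le (inter_eq_right.1 h) (by rw [hT3 A hAT, hT3 A₀ hA₀])
  exact this ▸ huA

lemma inter_mem_Ioo_of_mem_separating (hT3 : ∀ A ∈ T, #A = 3)
    (hTint : ∀ A ∈ T, ∀ B ∈ T, (A ∩ B).Nonempty) (hA₀ : A₀ ∈ T) (hu₀ : u ∉ A₀)
    (hA : A ∈ separating T u v) : A ∩ A₀ ∈ Ioo ∅ A₀ :=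
  mem_Ioo.2 ⟨empty_ssubset.2 (hTint A (mem_separating.1 hA).1 A₀ hA₀),
    inter_ssubset_of_mem_separating hT3 hA₀ hu₀ hA⟩

/-- The member of `T` avoiding `u` and `m` contains `v`, a point of `A \ {u, m}` and a point of
`B \ {u, m}`, distinct unless `A = B`; this leaves it no room to meet `A₀`. -/
lemma eq_of_inter_eq_singleton (hT3 : ∀ A ∈ T, #A = 3)
    (hTint : ∀ A ∈ T, ∀ B ∈ T, (A ∩ B).Nonempty)
    (hτ : ∀ S : Finset α, #S ≤ 2 → ∃ A ∈ T, A ∩ S = ∅) (hA₀ : A₀ ∈ T) (hu₀ : u ∉ A₀)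
    (hv₀ : v ∉ A₀) (huniq : ∀ C ∈ T, u ∉ C → v ∉ C → C = A₀)
    (hA : A ∈ separating T u v) (hB : B ∈ separating T u v) {m : α}
    (hAm : A ∩ A₀ = {m}) (hBm : B ∩ A₀ = {m}) : A = B := by
  obtain ⟨hAT, huA, hvA⟩ := mem_separating.1 hA
  obtain ⟨hBT, huB, hvB⟩ := mem_separating.1 hB
  have hmA : m ∈ A ∩ A₀ := hAm ▸ mem_singleton_self m
  have hmB : m ∈ B ∩ A₀ := hBm ▸ mem_singleton_self m
  rw [mem_inter] at hmA hmB
  obtain ⟨D, hDT, hD⟩ := hτ {u, m} card_le_two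
  have hDum : Disjoint D {u, m} := disjoint_iff_inter_eq_empty.2 hD
  have huD : u ∉ D := disjoint_right.1 hDum (mem_insert_self u {m})
  have hmD : m ∉ D := disjoint_right.1 hDum (mem_insert_of_mem (mem_singleton_self m))
  have hvD : v ∈ D := by
    by_contra hvD
    exact hmD (huniq D hDT huD hvD ▸ hmA.2)
  have point_outside {X : Finset α} (hXm : X ∩ A₀ = {m}) (hXT : X ∈ T) :
      ∃ a ∈ X ∩ D, a ∉ A₀ := by
    obtain ⟨a, ha⟩ := hTint X hXT D hDT
    refine ⟨a, ha, fun ha₀ => hmD ?_⟩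
    have : a = m := mem_singleton.1 (hXm ▸ mem_inter.2 ⟨(mem_inter.1 ha).1, ha₀⟩)
    exact this ▸ (mem_inter.1 ha).2
  obtain ⟨a, ha, ha₀⟩ := point_outside hAm hAT
  obtain ⟨b, hb, hb₀⟩ := point_outside hBm hBT
  rw [mem_inter] at ha hb
  obtain ⟨p, hp⟩ := hTint D hDT A₀ hA₀
  rw [mem_inter] at hp
  by_contra hAB
  have hab : a ≠ b := by
    rintro rfl
    have hum : u ≠ m := (ne_of_mem_of_not_mem hmA.2 hu₀).symm
    have hua : u ≠ a := (ne_of_mem_of_not_mem ha.2 huD).symm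
    have hma : m ≠ a := (ne_of_mem_of_not_mem ha.2 hmD).symm
    exact hAB ((eq_triple_of_card_eq_three (hT3 A hAT) huA hmA.1 ha.1 hum hua hma).trans
      (eq_triple_of_card_eq_three (hT3 B hBT) huB hmB.1 hb.1 hum hua hma).symm)
  have hD3 := eq_triple_of_card_eq_three (hT3 D hDT) ha.2 hb.2 hp.1 hab
    (ne_of_mem_of_not_mem hp.2 ha₀).symm (ne_of_mem_of_not_mem hp.2 hb₀).symm
  rw [hD3, mem_insert, mem_insert, mem_singleton] at hvD
  rcases hvD with rfl | rfl | rfl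
  exacts [hvA ha.1, hvB hb.1, hv₀ hp.2]

lemma inter_injOn_separating (hT3 : ∀ A ∈ T, #A = 3)
    (hTint : ∀ A ∈ T, ∀ B ∈ T, (A ∩ B).Nonempty)
    (hτ : ∀ S : Finset α, #S ≤ 2 → ∃ A ∈ T, A ∩ S = ∅) (hA₀ : A₀ ∈ T) (hu₀ : u ∉ A₀)
    (hv₀ : v ∉ A₀) (huniq : ∀ C ∈ T, u ∉ C → v ∉ C → C = A₀) :
    Set.InjOn (· ∩ A₀) (separating T u v) := by
  intro A hA B hB (hAB : A ∩ A₀ = B ∩ A₀)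
  obtain ⟨hAT, huA, -⟩ := mem_separating.1 hA
  obtain ⟨hBT, huB, -⟩ := mem_separating.1 hB
  have hpos : 0 < #(A ∩ A₀) := card_pos.2 (hTint A hAT A₀ hA₀)
  have hlt : #(A ∩ A₀) < 3 :=
    hT3 A₀ hA₀ ▸ card_lt_card (inter_ssubset_of_mem_separating hT3 hA₀ hu₀ hA)
  obtain h1 | h2 : #(A ∩ A₀) = 1 ∨ #(A ∩ A₀) = 2 := by omega
  · obtain ⟨m, hm⟩ := card_eq_one.1 h1
    exact eq_of_inter_eq_singleton hT3 hTint hτ hA₀ hu₀ hv₀ huniq hA hB hm (hAB ▸ hm)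
  · have hA' := sdiff_eq_singleton_of_card_eq (mem_sdiff.2 ⟨huA, hu₀⟩) (by rw [hT3 A hAT]; omega)
    have hB' := sdiff_eq_singleton_of_card_eq (mem_sdiff.2 ⟨huB, hu₀⟩)
      (by rw [hT3 B hBT, ← hAB]; omega)
    rw [← sdiff_union_inter A A₀, ← sdiff_union_inter B A₀, hA', hB', hAB]

/-- One of the two traces has two points, and then the member carrying it meets the other one
only outside `A₀`, in its letter `u` or `v`, which the other member avoids. -/
lemma inter_ne_sdiff_of_mem_separating (hT3 : ∀ A ∈ T, #A = 3)
    (hTint : ∀ A ∈ T, ∀ B ∈ T, (A ∩ B).Nonempty) (hA₀ : A₀ ∈ T) (hu₀ : u ∉ A₀)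
    (hv₀ : v ∉ A₀) (hA : A ∈ separating T u v) (hB : B ∈ separating T v u) :
    A ∩ A₀ ≠ A₀ \ B := by
  intro h
  obtain ⟨hAT, huA, hvA⟩ := mem_separating.1 hA
  obtain ⟨hBT, hvB, huB⟩ := mem_separating.1 hB
  have hsplit : #(A ∩ A₀) + #(B ∩ A₀) = 3 := by
    rw [h, inter_comm, ← hT3 A₀ hA₀]
    exact card_sdiff_add_card_inter A₀ B
  have hApos := card_pos.2 (hTint A hAT A₀ hA₀)
  have hBpos := card_pos.2 (hTint B hBT A₀ hA₀)
  obtain ⟨w, hw⟩ := hTint A hAT B hBT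
  rw [mem_inter] at hw
  have hw₀ : w ∉ A₀ := fun hw₀ => (mem_sdiff.1 (h ▸ mem_inter.2 ⟨hw.1, hw₀⟩)).2 hw.2
  obtain hA2 | hB2 : #(A ∩ A₀) = 2 ∨ #(B ∩ A₀) = 2 := by omega
  · have hAu := sdiff_eq_singleton_of_card_eq (mem_sdiff.2 ⟨huA, hu₀⟩) (by rw [hT3 A hAT]; omega)
    have : w = u := mem_singleton.1 (hAu ▸ mem_sdiff.2 ⟨hw.1, hw₀⟩)
    exact huB (this ▸ hw.2)
  · have hBv := sdiff_eq_singleton_of_card_eq (mem_sdiff.2 ⟨hvB, hv₀⟩) (by rw [hT3 B hBT]; omega)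
    have : w = v := mem_singleton.1 (hBv ▸ mem_sdiff.2 ⟨hw.2, hw₀⟩)
    exact hvA (this ▸ hw.1)

lemma card_separating_add_card_separating_le_six (hT3 : ∀ A ∈ T, #A = 3)
    (hTint : ∀ A ∈ T, ∀ B ∈ T, (A ∩ B).Nonempty)
    (hτ : ∀ S : Finset α, #S ≤ 2 → ∃ A ∈ T, A ∩ S = ∅) (hA₀ : A₀ ∈ T) (hu₀ : u ∉ A₀)
    (hv₀ : v ∉ A₀) (huniq : ∀ C ∈ T, u ∉ C → v ∉ C → C = A₀) :
    #(separating T u v) + #(separating T v u) ≤ 6 := by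
  have hinjA := inter_injOn_separating hT3 hTint hτ hA₀ hu₀ hv₀ huniq
  have hinjB : Set.InjOn (A₀ \ ·) (separating T v u) := fun B hB B' hB' (h : A₀ \ B = A₀ \ B') =>
    inter_injOn_separating hT3 hTint hτ hA₀ hv₀ hu₀ (fun C hC hvC huC => huniq C hC huC hvC)
      hB hB' (by simpa only [sdiff_sdiff_self_left, inter_comm] using congrArg (A₀ \ ·) h)
  have hdisj :
      Disjoint ((separating T u v).image (· ∩ A₀)) ((separating T v u).image (A₀ \ ·)) := by
    simp only [disjoint_left, mem_image]
    rintro _ ⟨A, hA, rfl⟩ ⟨B, hB, hBA⟩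
    exact inter_ne_sdiff_of_mem_separating hT3 hTint hA₀ hu₀ hv₀ hA hB hBA.symm
  have hsub : (separating T u v).image (· ∩ A₀) ∪ (separating T v u).image (A₀ \ ·) ⊆
      Ioo ∅ A₀ := by
    simp only [union_subset_iff, image_subset_iff]
    refine ⟨fun A hA => inter_mem_Ioo_of_mem_separating hT3 hTint hA₀ hu₀ hA, fun B hB => ?_⟩
    rw [← sdiff_inter_self_right]
    exact sdiff_mem_Ioo_empty (inter_mem_Ioo_of_mem_separating hT3 hTint hA₀ hv₀ hB)
  calc #(separating T u v) + #(separating T v u)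
      = #((separating T u v).image (· ∩ A₀) ∪ (separating T v u).image (A₀ \ ·)) := by
        rw [card_union_of_disjoint hdisj, card_image_of_injOn hinjA, card_image_of_injOn hinjB]
    _ ≤ #(Ioo ∅ A₀) := card_le_card hsub
    _ = 6 := by rw [card_Ioo_finset (empty_subset A₀), hT3 A₀ hA₀]; rfl

end

theorem stmt_5 (n : ℕ) (T : Finset (Finset (Fin n)))
    (huniform : ∀ A ∈ T, A.card = 3)
    (hint : ∀ A ∈ T, ∀ B ∈ T, (A ∩ B).Nonempty)
    (hτ : ∀ S : Finset (Fin n), S.card ≤ 2 → ∃ A ∈ T, A ∩ S = ∅)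
    (hxy : ∃ x y : Fin n, x ≠ y ∧ (T.filter (fun A => x ∉ A ∧ y ∉ A)).card ≤ 1) :
    ∃ v : Fin n, (T.filter (fun A => v ∉ A)).card ≤ 4 := by
  obtain ⟨x, y, -, hxy⟩ := hxy
  obtain ⟨A₀, hA₀, hA₀xy⟩ := hτ {x, y} card_le_two
  have hA₀xy : Disjoint A₀ {x, y} := disjoint_iff_inter_eq_empty.2 hA₀xy
  have hx₀ : x ∉ A₀ := disjoint_right.1 hA₀xy (mem_insert_self x {y})
  have hy₀ : y ∉ A₀ := disjoint_right.1 hA₀xy (mem_insert_of_mem (mem_singleton_self y))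
  have huniq : ∀ C ∈ T, x ∉ C → y ∉ C → C = A₀ := fun C hC hxC hyC =>
    card_le_one.1 hxy C (mem_filter.2 ⟨hC, hxC, hyC⟩) A₀ (mem_filter.2 ⟨hA₀, hx₀, hy₀⟩)
  have hsum := card_separating_add_card_separating_le_six huniform hint hτ hA₀ hx₀ hy₀ huniq
  by_cases hx : #(separating T x y) ≤ 3
  · exact ⟨y, (card_filter_notMem_le_card_separating_add_one huniq).trans (by omega)⟩
  · exact ⟨x, (card_filter_notMem_le_card_separating_add_one
      (fun C hC hyC hxC => huniq C hC hxC hyC)).trans (by omega)⟩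
end

section
/- Let 1 ≤ i ≤ j ≤ ℓ and let ℱ ⊆ ([n] choose ℓ) be an intersecting family with covering number τ(ℱ) ≥ j. Then Δ_i(ℱ) ≤ ℓ^{j-i} · Δ_j(ℱ), where Δ_r(ℱ) = max over r-element sets A of the number of members of ℱ containing A. -/
theorem stmt_10 (n ℓ i j : ℕ) (hi : 1 ≤ i) (hij : i ≤ j) (hjl : j ≤ ℓ)
    (F : Finset (Finset (Fin n)))
    (huniform : ∀ A ∈ F, A.card = ℓ)
    (hint : ∀ A ∈ F, ∀ B ∈ F, (A ∩ B).Nonempty)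
    (hτ : ∀ T : Finset (Fin n), (∀ A ∈ F, (A ∩ T).Nonempty) → j ≤ T.card)
    (Δj : ℕ)
    (hΔj : IsGreatest {m : ℕ | ∃ S : Finset (Fin n), S.card = j ∧
      (F.filter (fun A => S ⊆ A)).card = m} Δj) :
    ∀ A : Finset (Fin n), A.card = i →
      (F.filter (fun B => A ⊆ B)).card ≤ ℓ ^ (j - i) * Δj := by
  have key : ∀ s : ℕ, ∀ A : Finset (Fin n), A.card + s = j →
      (F.filter (fun B => A ⊆ B)).card ≤ ℓ ^ s * Δj := by
    intro s
    induction s with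
    | zero =>
      intro A hA
      simp only [Nat.add_zero] at hA
      simpa using hΔj.2 ⟨A, hA, rfl⟩
    | succ s ih =>
      intro A hA
      have hnot : ¬ (∀ C ∈ F, (C ∩ A).Nonempty) := by
        intro h
        have := hτ A h
        omega
      push_neg at hnot
      obtain ⟨B, hB, hBA⟩ := hnot
      have hsub : F.filter (fun C => A ⊆ C) ⊆
          B.biUnion (fun x => F.filter (fun C => insert x A ⊆ C)) := by
        intro C hC
        simp only [Finset.mem_filter] at hC
        obtain ⟨hCF, hAC⟩ := hC
        obtain ⟨x, hx⟩ := hint C hCF B hB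
        simp only [Finset.mem_inter] at hx
        refine Finset.mem_biUnion.2 ⟨x, hx.2, ?_⟩
        simp [Finset.mem_filter, hCF, Finset.insert_subset_iff, hx.1, hAC]
      calc (F.filter (fun C => A ⊆ C)).card
          ≤ ∑ x ∈ B, (F.filter (fun C => insert x A ⊆ C)).card :=
            (Finset.card_le_card hsub).trans Finset.card_biUnion_le
        _ ≤ ∑ _x ∈ B, ℓ ^ s * Δj := by
            refine Finset.sum_le_sum fun x hx => ih (insert x A) ?_
            have hxA : x ∉ A := by
              intro hxA
              have : x ∈ B ∩ A := Finset.mem_inter.2 ⟨hx, hxA⟩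
              simp [hBA] at this
            rw [Finset.card_insert_of_notMem hxA]; omega
        _ = ℓ ^ (s + 1) * Δj := by
            rw [Finset.sum_const, huniform B hB, smul_eq_mul, pow_succ]; ring
  intro A hA
  exact key (j - i) A (by omega)
end

section
/- Let 𝒜 ⊆ 2^X and ℬ ⊆ 2^{[m]} be intersecting families. Then the wreath product 𝒜 ∘ ℬ (on ground set the disjoint union of m copies of X, with edges ⋃_{i∈B} A_i for B ∈ ℬ and A_i in the i-th copy of 𝒜) is intersecting and its covering number satisfies τ(𝒜 ∘ ℬ) = τ(𝒜) · τ(ℬ). -/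
theorem stmt_12 {α : Type*} [DecidableEq α] (m : ℕ)
    (A : Finset (Finset α)) (B : Finset (Finset (Fin m)))
    (hA : ∀ A₁ ∈ A, ∀ A₂ ∈ A, (A₁ ∩ A₂).Nonempty)
    (hB : ∀ B₁ ∈ B, ∀ B₂ ∈ B, (B₁ ∩ B₂).Nonempty)
    (C : Finset (Finset (α × Fin m)))
    -- C is the wreath product A ∘ B : its members are exactly the sets
    -- ⋃_{i ∈ B'} A_i × {i} with B' ∈ B and each A_i ∈ A.
    (hC : ∀ E : Finset (α × Fin m), E ∈ C ↔
      ∃ B' ∈ B, ∃ g : Fin m → Finset α, (∀ i ∈ B', g i ∈ A) ∧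
        E = B'.biUnion (fun i => (g i).image (fun a => (a, i))))
    (τA τB : ℕ)
    (hτA : IsLeast {t : ℕ | ∃ T : Finset α, T.card = t ∧
      ∀ A₁ ∈ A, (A₁ ∩ T).Nonempty} τA)
    (hτB : IsLeast {t : ℕ | ∃ T : Finset (Fin m), T.card = t ∧
      ∀ B₁ ∈ B, (B₁ ∩ T).Nonempty} τB) :
    (∀ E₁ ∈ C, ∀ E₂ ∈ C, (E₁ ∩ E₂).Nonempty) ∧
    IsLeast {t : ℕ | ∃ T : Finset (α × Fin m), T.card = t ∧
      ∀ E ∈ C, (E ∩ T).Nonempty} (τA * τB) := by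
  classical
  constructor
  · rintro E₁ h₁ E₂ h₂
    obtain ⟨B₁, hB₁, g₁, hg₁, rfl⟩ := (hC E₁).1 h₁
    obtain ⟨B₂, hB₂, g₂, hg₂, rfl⟩ := (hC E₂).1 h₂
    obtain ⟨i, hi⟩ := hB B₁ hB₁ B₂ hB₂
    rw [Finset.mem_inter] at hi
    obtain ⟨a, ha⟩ := hA (g₁ i) (hg₁ i hi.1) (g₂ i) (hg₂ i hi.2)
    rw [Finset.mem_inter] at ha
    refine ⟨(a, i), ?_⟩
    simp only [Finset.mem_inter, Finset.mem_biUnion, Finset.mem_image]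
    exact ⟨⟨i, hi.1, a, ha.1, rfl⟩, ⟨i, hi.2, a, ha.2, rfl⟩⟩
  · obtain ⟨⟨TA, hTAcard, hTAcov⟩, hτAlb⟩ := hτA
    obtain ⟨⟨TB, hTBcard, hTBcov⟩, hτBlb⟩ := hτB
    constructor
    · refine ⟨TA ×ˢ TB, by simp [hTAcard, hTBcard], ?_⟩
      intro E hE
      obtain ⟨B', hB', g, hg, rfl⟩ := (hC E).1 hE
      obtain ⟨i, hi⟩ := hTBcov B' hB'
      rw [Finset.mem_inter] at hi
      obtain ⟨a, ha⟩ := hTAcov (g i) (hg i hi.1)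
      rw [Finset.mem_inter] at ha
      refine ⟨(a, i), ?_⟩
      simp only [Finset.mem_inter, Finset.mem_biUnion, Finset.mem_image,
        Finset.mem_product]
      exact ⟨⟨i, hi.1, a, ha.1, rfl⟩, ha.2, hi.2⟩
    · rintro t ⟨T, rfl, hTcov⟩
      set Ti : Fin m → Finset α := fun i => (T.filter (fun p => p.2 = i)).image Prod.fst with hTi
      set S : Finset (Fin m) :=
        Finset.univ.filter (fun i => ∀ A₁ ∈ A, (A₁ ∩ Ti i).Nonempty) with hS
      -- S is a cover of B
      have hScov : ∀ B₁ ∈ B, (B₁ ∩ S).Nonempty := by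
        intro B₁ hB₁
        by_contra hcon
        have hch : ∀ i : Fin m, ∃ A₁ : Finset α, i ∈ B₁ → A₁ ∈ A ∧ A₁ ∩ Ti i = ∅ := by
          intro i
          by_cases hi : i ∈ B₁
          · by_contra h
            push_neg at h
            refine hcon ⟨i, Finset.mem_inter.2 ⟨hi, ?_⟩⟩
            rw [hS, Finset.mem_filter]
            refine ⟨Finset.mem_univ i, fun A₁ hA₁ => ?_⟩
            rw [Finset.nonempty_iff_ne_empty]
            exact Finset.nonempty_iff_ne_empty.1 ((h A₁).2 hA₁)
          · exact ⟨∅, fun h => absurd h hi⟩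
        choose g hg using hch
        have hEC : B₁.biUnion (fun i => (g i).image (fun a => (a, i))) ∈ C :=
          (hC _).2 ⟨B₁, hB₁, g, fun i hi => (hg i hi).1, rfl⟩
        obtain ⟨p, hp⟩ := hTcov _ hEC
        rw [Finset.mem_inter, Finset.mem_biUnion] at hp
        obtain ⟨⟨i, hi, hpi⟩, hpT⟩ := hp
        rw [Finset.mem_image] at hpi
        obtain ⟨a, ha, rfl⟩ := hpi
        have : a ∈ g i ∩ Ti i := by
          rw [Finset.mem_inter]
          refine ⟨ha, ?_⟩
          rw [hTi]
          exact Finset.mem_image.2 ⟨(a, i), Finset.mem_filter.2 ⟨hpT, rfl⟩, rfl⟩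
        rw [(hg i hi).2] at this
        exact absurd this (Finset.notMem_empty a)
      have hSB : τB ≤ S.card := hτBlb ⟨S, rfl, hScov⟩
      have hTiA : ∀ i ∈ S, τA ≤ (Ti i).card := by
        intro i hi
        rw [hS, Finset.mem_filter] at hi
        exact hτAlb ⟨Ti i, rfl, hi.2⟩
      have hTicard : ∀ i : Fin m, (Ti i).card = (T.filter (fun p => p.2 = i)).card := by
        intro i
        rw [hTi]
        apply Finset.card_image_of_injOn
        intro p hp q hq hpq
        rw [Finset.mem_coe, Finset.mem_filter] at hp hq
        exact Prod.ext hpq (hp.2.trans hq.2.symm)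
      calc τA * τB ≤ τA * S.card := Nat.mul_le_mul_left τA hSB
        _ = ∑ _i ∈ S, τA := by rw [Finset.sum_const, smul_eq_mul, mul_comm]
        _ ≤ ∑ i ∈ S, (Ti i).card := Finset.sum_le_sum hTiA
        _ = ∑ i ∈ S, (T.filter (fun p => p.2 = i)).card := by
              exact Finset.sum_congr rfl fun i _ => hTicard i
        _ = (S.biUnion (fun i => T.filter (fun p => p.2 = i))).card := by
              rw [Finset.card_biUnion]
              intro i _ j _ hij
              simp only [Function.onFun]
              rw [Finset.disjoint_filter]
              intro p _ h1 h2
              exact hij (h1.symm.trans h2)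
        _ ≤ T.card := Finset.card_le_card (Finset.biUnion_subset.2 fun i _ => Finset.filter_subset _ _)
end

section
/- For integers k ≤ p ≤ q, one has C(p,k)·C(q,k) > C(p-1,k)·C(q+1,k), where C(m,k) denotes the binomial coefficient. -/
/-
Since `C(m-1,k) * m = C(m,k) * (m-k)`, the ratio `C(m,k) / C(m-1,k) = m / (m-k)` is strictly
decreasing in `m ≥ k` when `k ≥ 1`. Comparing it at `m = p` and at `m = q + 1 > p` gives the claim
after clearing denominators.
-/

namespace Nat

theorem choose_pred_mul (n k : ℕ) : (n - 1).choose k * n = n.choose k * (n - k) := by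
  cases n with
  | zero => simp
  | succ n => simpa using choose_mul_succ_eq n k

theorem sub_mul_lt_mul_sub {k m n : ℕ} (hk : 1 ≤ k) (hkm : k ≤ m) (hmn : m < n) :
    (m - k) * n < m * (n - k) := by
  zify [hkm, hkm.trans hmn.le]
  nlinarith

theorem choose_pred_mul_choose_lt {k m n : ℕ} (hk : 1 ≤ k) (hkm : k ≤ m) (hmn : m < n) :
    (m - 1).choose k * n.choose k < m.choose k * (n - 1).choose k := by
  have hkn : k ≤ n - 1 := by omega
  have hpos : 0 < m.choose k * (n - 1).choose k :=
    Nat.mul_pos (choose_pos hkm) (choose_pos hkn)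
  refine Nat.lt_of_mul_lt_mul_right (a := m * (n - k)) ?_
  calc (m - 1).choose k * n.choose k * (m * (n - k))
      = ((m - 1).choose k * m) * (n.choose k * (n - k)) := by ring
    _ = (m.choose k * (m - k)) * ((n - 1).choose k * n) := by
        rw [choose_pred_mul m k, choose_pred_mul n k]
    _ = m.choose k * (n - 1).choose k * ((m - k) * n) := by ring
    _ < m.choose k * (n - 1).choose k * (m * (n - k)) :=
        Nat.mul_lt_mul_of_pos_left (sub_mul_lt_mul_sub hk hkm hmn) hpos

end Nat

theorem stmt_14 (k p q : ℕ) (hk : 1 ≤ k) (hkp : k ≤ p) (hpq : p ≤ q) :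
    (p - 1).choose k * (q + 1).choose k < p.choose k * q.choose k := by
  simpa using Nat.choose_pred_mul_choose_lt hk hkp (Nat.lt_succ_of_le hpq)
end

section
/- For every integer k ≥ 24 with k ≡ 2 (mod 3) (so that (4k+1)/3 and (4k-5)/3 are integers), C((4k+1)/3, k) · C((4k-5)/3, k) > C(2k-1, k). -/
/-!
Write `k = 3m + 2` with `m ≥ 8`. Since `C(2n+3, n+2) ≤ 4 C(2n+1, n+1)`, the left side
`C(6m+3, 3m+2)` grows by a factor of at most `4³ = 64` when `m` increases by one. On the right,
raising `m` by one adds 4 to the top and 3 to the bottom of each binomial coefficient, which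
multiplies it by roughly `4⁴/3³ ≈ 9.5` and, for `m ≥ 8`, by at least `8`, so the product
grows by at least `64`. The case `m = 8` is a direct computation.
-/

namespace Nat

-- Truncated subtraction is harmless: for `k > n` both sides vanish.
theorem choose_add_four_add_three_mul (n k : ℕ) :
    (n + 4).choose (k + 3) * ((k + 1) * (k + 2) * (k + 3) * (n + 1 - k)) =
      n.choose k * ((n + 1) * (n + 2) * (n + 3) * (n + 4)) := by
  have h₁ : (n + 1) * n.choose k = (n + 1).choose (k + 1) * (k + 1) :=
    add_one_mul_choose_eq n k
  have h₂ : (n + 2) * (n + 1).choose (k + 1) = (n + 2).choose (k + 2) * (k + 2) :=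
    add_one_mul_choose_eq (n + 1) (k + 1)
  have h₃ : (n + 3) * (n + 2).choose (k + 2) = (n + 3).choose (k + 3) * (k + 3) :=
    add_one_mul_choose_eq (n + 2) (k + 2)
  have h₄ : (n + 3).choose (k + 3) * (n + 4) = (n + 4).choose (k + 3) * (n + 1 - k) := by
    rw [choose_mul_succ_eq, show n + 3 + 1 - (k + 3) = n + 1 - k by omega]
  calc (n + 4).choose (k + 3) * ((k + 1) * (k + 2) * (k + 3) * (n + 1 - k))
      = (n + 4).choose (k + 3) * (n + 1 - k) * (k + 3) * (k + 2) * (k + 1) := by ring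
    _ = (n + 3).choose (k + 3) * (k + 3) * (n + 4) * (k + 2) * (k + 1) := by
        rw [← h₄]; ring
    _ = (n + 2).choose (k + 2) * (k + 2) * (n + 3) * (n + 4) * (k + 1) := by rw [← h₃]; ring
    _ = (n + 1).choose (k + 1) * (k + 1) * (n + 2) * (n + 3) * (n + 4) := by rw [← h₂]; ring
    _ = n.choose k * ((n + 1) * (n + 2) * (n + 3) * (n + 4)) := by rw [← h₁]; ring

theorem mul_choose_le_choose_add_four_add_three {c n k : ℕ}
    (h : c * ((k + 1) * (k + 2) * (k + 3) * (n + 1 - k)) ≤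
      (n + 1) * (n + 2) * (n + 3) * (n + 4)) :
    c * n.choose k ≤ (n + 4).choose (k + 3) := by
  rcases Nat.lt_or_ge n k with hnk | hkn
  · simp [choose_eq_zero_of_lt hnk]
  · refine Nat.le_of_mul_le_mul_right (c := (k + 1) * (k + 2) * (k + 3) * (n + 1 - k)) ?_
      (Nat.mul_pos (by positivity) (by omega))
    calc c * n.choose k * ((k + 1) * (k + 2) * (k + 3) * (n + 1 - k))
        = n.choose k * (c * ((k + 1) * (k + 2) * (k + 3) * (n + 1 - k))) := by ring
      _ ≤ n.choose k * ((n + 1) * (n + 2) * (n + 3) * (n + 4)) := Nat.mul_le_mul_left _ h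
      _ = _ := (choose_add_four_add_three_mul n k).symm

theorem choose_two_mul_add_three_le (n : ℕ) :
    (2 * n + 3).choose (n + 2) ≤ 4 * (2 * n + 1).choose (n + 1) := by
  have hstep :
      (2 * n + 3) * (2 * n + 2).choose (n + 1) = (2 * n + 3).choose (n + 2) * (n + 2) :=
    add_one_mul_choose_eq (2 * n + 2) (n + 1)
  have hpascal : (2 * n + 2).choose (n + 1) = 2 * (2 * n + 1).choose (n + 1) := by
    rw [choose_succ_succ', ← choose_symm_half]; ring
  refine Nat.le_of_mul_le_mul_right (c := n + 2) ?_ (by omega)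
  rw [← hstep, hpascal]
  nlinarith

end Nat

open Nat

theorem choose_six_mul_add_three_lt (m : ℕ) (hm : 8 ≤ m) :
    (6 * m + 3).choose (3 * m + 2) <
      (4 * m + 3).choose (3 * m + 2) * (4 * m + 1).choose (3 * m + 2) := by
  induction m, hm using Nat.le_induction with
  | base => norm_num [choose_eq_descFactorial_div_factorial]
  | succ m hm ih =>
    have hleft :
        (6 * (m + 1) + 3).choose (3 * (m + 1) + 2) ≤ 64 * (6 * m + 3).choose (3 * m + 2) := by
      have h₁ := choose_two_mul_add_three_le (3 * m + 3)
      have h₂ := choose_two_mul_add_three_le (3 * m + 2)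
      have h₃ := choose_two_mul_add_three_le (3 * m + 1)
      ring_nf at h₁ h₂ h₃ ⊢
      omega
    -- After substituting `m = t + 8`, both bounds hold coefficientwise as polynomials in `t`.
    have hfirst :
        8 * (4 * m + 3).choose (3 * m + 2) ≤ (4 * m + 3 + 4).choose (3 * m + 2 + 3) := by
      refine mul_choose_le_choose_add_four_add_three ?_
      rw [show 4 * m + 3 + 1 - (3 * m + 2) = m + 2 by omega]
      obtain ⟨t, rfl⟩ := Nat.exists_eq_add_of_le hm
      ring_nf
      omega
    have hsecond :
        8 * (4 * m + 1).choose (3 * m + 2) ≤ (4 * m + 1 + 4).choose (3 * m + 2 + 3) := by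
      refine mul_choose_le_choose_add_four_add_three ?_
      rw [show 4 * m + 1 + 1 - (3 * m + 2) = m by omega]
      obtain ⟨t, rfl⟩ := Nat.exists_eq_add_of_le hm
      ring_nf
      omega
    calc (6 * (m + 1) + 3).choose (3 * (m + 1) + 2)
        ≤ 64 * (6 * m + 3).choose (3 * m + 2) := hleft
      _ < 64 * ((4 * m + 3).choose (3 * m + 2) * (4 * m + 1).choose (3 * m + 2)) := by omega
      _ = (8 * (4 * m + 3).choose (3 * m + 2)) * (8 * (4 * m + 1).choose (3 * m + 2)) := by ring
      _ ≤ (4 * m + 3 + 4).choose (3 * m + 2 + 3) * (4 * m + 1 + 4).choose (3 * m + 2 + 3) :=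
        Nat.mul_le_mul hfirst hsecond
      _ = _ := by ring_nf

theorem stmt_15 (k : ℕ) (hk : 24 ≤ k) (hmod : k % 3 = 2) :
    (2 * k - 1).choose k < ((4 * k + 1) / 3).choose k * ((4 * k - 5) / 3).choose k := by
  obtain ⟨m, rfl⟩ : ∃ m, k = 3 * m + 2 := ⟨k / 3, by omega⟩
  rw [show 2 * (3 * m + 2) - 1 = 6 * m + 3 by omega,
    show (4 * (3 * m + 2) + 1) / 3 = 4 * m + 3 by omega,
    show (4 * (3 * m + 2) - 5) / 3 = 4 * m + 1 by omega]
  exact choose_six_mul_add_three_lt m (by omega)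
end

section
/- Let X₁, X₂, X₃ be disjoint 6-element sets, 𝒯_i a copy of the family 𝒯₀ (the 10-edge intersecting 3-graph on 6 vertices with all degrees 5 and all pair-degrees 2) on X_i, and ℱ = ⋃_{i<j} {T ∪ T' : T ∈ 𝒯_i, T' ∈ 𝒯_j}. Then for every 5-element set Y ⊆ X₁ ∪ X₂ ∪ X₃, at least 20 members of ℱ are disjoint from Y; hence m₅(6) ≥ 20. -/
/-- Füredi's family 𝒯₀ on 6 vertices (0-indexed). -/
def T0 : Finset (Finset (Fin 6)) :=
  {{0, 1, 2}, {0, 1, 3}, {2, 3, 4}, {2, 3, 5}, {0, 4, 5}, {1, 4, 5},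
   {0, 2, 4}, {1, 3, 4}, {0, 3, 5}, {1, 2, 5}}

/-- The copy of 𝒯₀ on the `i`-th of three disjoint 6-element sets. -/
def copyT0 (i : Fin 3) : Finset (Finset (Fin 6 × Fin 3)) :=
  T0.image (Finset.image (fun a => (a, i)))

/-- The 6-uniform family ⋃_{i<j} {T ∪ T' : T ∈ 𝒯_i, T' ∈ 𝒯_j}. -/
def F17 : Finset (Finset (Fin 6 × Fin 3)) :=
  Finset.image₂ (· ∪ ·) (copyT0 0) (copyT0 1) ∪
  Finset.image₂ (· ∪ ·) (copyT0 0) (copyT0 2) ∪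
  Finset.image₂ (· ∪ ·) (copyT0 1) (copyT0 2)

set_option maxHeartbeats 2000000

def g (a : ℕ) : ℕ := if a = 0 then 10 else if a = 1 then 5 else if a = 2 then 2 else 0

lemma gbound : ∀ Z : Finset (Fin 6), g Z.card ≤ (T0.filter (fun T => T ∩ Z = ∅)).card := by
  decide

lemma T0_nonempty : ∀ T ∈ T0, T.Nonempty := by decide

lemma mem_copyT0 {i : Fin 3} {T : Finset (Fin 6)} (h : T ∈ T0) :
    T.image (fun a => (a, i)) ∈ copyT0 i := Finset.mem_image_of_mem _ h

attribute [irreducible] T0 copyT0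

lemma arith (a b c m0 m1 m2 : ℕ) (habc : a + b + c = 5)
    (h0 : g a ≤ m0) (h1 : g b ≤ m1) (h2 : g c ≤ m2) :
    20 ≤ m0 * m1 + m0 * m2 + m1 * m2 := by
  have ha : a ≤ 5 := by omega
  have hb : b ≤ 5 := by omega
  have hc : c ≤ 5 := by omega
  have key : 20 ≤ g a * g b + g a * g c + g b * g c := by
    interval_cases a <;> interval_cases b <;> interval_cases c <;> first | omega | decide
  calc (20:ℕ) ≤ g a * g b + g a * g c + g b * g c := key
    _ ≤ m0 * m1 + m0 * m2 + m1 * m2 := by gcongr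

/-- membership in the i-side of a union of two embedded blocks -/
lemma mem_side {i j : Fin 3} (hij : i ≠ j) (U V : Finset (Fin 6)) (a : Fin 6) :
    (a, i) ∈ U.image (fun a => (a, i)) ∪ V.image (fun a => (a, j)) ↔ a ∈ U := by
  simp [Finset.mem_union, Finset.mem_image, Prod.ext_iff, Ne.symm hij]

lemma union_inj {i j : Fin 3} (hij : i ≠ j) (T T' S S' : Finset (Fin 6))
    (h : T.image (fun a => (a, i)) ∪ T'.image (fun a => (a, j)) =
         S.image (fun a => (a, i)) ∪ S'.image (fun a => (a, j))) : T = S ∧ T' = S' := by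
  constructor
  · ext a
    rw [← mem_side hij T T' a, h, mem_side hij]
  · ext a
    have h' : T'.image (fun a => (a, j)) ∪ T.image (fun a => (a, i)) =
              S'.image (fun a => (a, j)) ∪ S.image (fun a => (a, i)) := by
      rw [Finset.union_comm, h, Finset.union_comm]
    rw [← mem_side hij.symm T' T a, h', mem_side hij.symm]

lemma memZ (Y : Finset (Fin 6 × Fin 3)) (i : Fin 3) (a : Fin 6) :
    a ∈ (Y.filter (fun p => p.2 = i)).image Prod.fst ↔ (a, i) ∈ Y := by
  simp only [Finset.mem_image, Finset.mem_filter]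
  constructor
  · rintro ⟨p, ⟨hp, h2⟩, h1⟩
    have : p = (a, i) := Prod.ext h1 h2
    rwa [this] at hp
  · intro h
    exact ⟨(a, i), ⟨h, rfl⟩, rfl⟩

lemma pairBound (Y : Finset (Fin 6 × Fin 3)) {i j : Fin 3} (hij : i ≠ j) :
    (T0.filter (fun T => T ∩ ((Y.filter (fun p => p.2 = i)).image Prod.fst) = ∅)).card *
    (T0.filter (fun T => T ∩ ((Y.filter (fun p => p.2 = j)).image Prod.fst) = ∅)).card ≤
    ((Finset.image₂ (· ∪ ·) (copyT0 i) (copyT0 j)).filter (fun A => A ∩ Y = ∅)).card := by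
  rw [← Finset.card_product]
  apply Finset.card_le_card_of_injOn
    (fun p => p.1.image (fun a => (a, i)) ∪ p.2.image (fun a => (a, j)))
  · rintro ⟨T, T'⟩ hp
    rw [Finset.mem_coe, Finset.mem_product] at hp
    obtain ⟨hT, hT'⟩ := hp
    rw [Finset.mem_filter] at hT hT'
    rw [Finset.mem_coe]
    refine Finset.mem_filter.2 ⟨?_, ?_⟩
    · exact Finset.mem_image₂_of_mem (mem_copyT0 hT.1) (mem_copyT0 hT'.1)
    · rw [Finset.eq_empty_iff_forall_notMem]
      rintro ⟨a, k⟩ hmem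
      rw [Finset.mem_inter, Finset.mem_union] at hmem
      obtain ⟨hmem1, hmem2⟩ := hmem
      rcases hmem1 with hm | hm
      · rw [Finset.mem_image] at hm
        obtain ⟨x, hx, hxe⟩ := hm
        obtain ⟨rfl, rfl⟩ : x = a ∧ i = k := by
          simpa [Prod.ext_iff] using hxe
        have haZ : x ∈ (Y.filter (fun p => p.2 = i)).image Prod.fst := (memZ Y i x).2 hmem2
        have : x ∈ T ∩ ((Y.filter (fun p => p.2 = i)).image Prod.fst) :=
          Finset.mem_inter.2 ⟨hx, haZ⟩
        rw [hT.2] at this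
        exact absurd this (Finset.notMem_empty x)
      · rw [Finset.mem_image] at hm
        obtain ⟨x, hx, hxe⟩ := hm
        obtain ⟨rfl, rfl⟩ : x = a ∧ j = k := by
          simpa [Prod.ext_iff] using hxe
        have haZ : x ∈ (Y.filter (fun p => p.2 = j)).image Prod.fst := (memZ Y j x).2 hmem2
        have : x ∈ T' ∩ ((Y.filter (fun p => p.2 = j)).image Prod.fst) :=
          Finset.mem_inter.2 ⟨hx, haZ⟩
        rw [hT'.2] at this
        exact absurd this (Finset.notMem_empty x)
  · rintro ⟨T, T'⟩ _ ⟨S, S'⟩ _ heq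
    obtain ⟨h1, h2⟩ := union_inj hij T T' S S' heq
    exact Prod.ext h1 h2

lemma snd_image {i j : Fin 3} (A : Finset (Fin 6 × Fin 3))
    (hA : A ∈ Finset.image₂ (· ∪ ·) (copyT0 i) (copyT0 j)) :
    A.image Prod.snd = {i, j} := by
  rw [Finset.mem_image₂] at hA
  obtain ⟨B, hB, C, hC, hBC⟩ := hA
  rw [copyT0, Finset.mem_image] at hB hC
  obtain ⟨T, hT, rfl⟩ := hB
  obtain ⟨T', hT', rfl⟩ := hC
  have hTn := T0_nonempty T hT
  have hT'n := T0_nonempty T' hT'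
  rw [← hBC, Finset.image_union, Finset.image_image, Finset.image_image]
  show T.image (fun _ => i) ∪ T'.image (fun _ => j) = {i, j}
  rw [Finset.image_const hTn, Finset.image_const hT'n]
  rfl

theorem stmt_17 :
    ∀ Y : Finset (Fin 6 × Fin 3), Y.card = 5 →
      20 ≤ (F17.filter (fun A => A ∩ Y = ∅)).card := by
  intro Y hY
  set Z : Fin 3 → Finset (Fin 6) :=
    fun i => (Y.filter (fun p => p.2 = i)).image Prod.fst with hZ
  set m : Fin 3 → ℕ := fun i => (T0.filter (fun T => T ∩ Z i = ∅)).card with hm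
  -- the cardinalities of the blocks sum to 5
  have hcard : ∀ i, (Z i).card = (Y.filter (fun p => p.2 = i)).card := by
    intro i
    apply Finset.card_image_of_injOn
    intro p hp q hq hpq
    rw [Finset.mem_coe, Finset.mem_filter] at hp hq
    exact Prod.ext hpq (hp.2.trans hq.2.symm)
  have hsum : (Z 0).card + (Z 1).card + (Z 2).card = 5 := by
    rw [hcard, hcard, hcard]
    have := Finset.card_eq_sum_card_fiberwise
      (f := Prod.snd) (s := Y) (t := Finset.univ) (fun x _ => Finset.mem_univ x.2)
    rw [Fin.sum_univ_three] at this
    omega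
  -- split the filtered family into three disjoint parts
  have hsplit : F17.filter (fun A => A ∩ Y = ∅) =
      (Finset.image₂ (· ∪ ·) (copyT0 0) (copyT0 1)).filter (fun A => A ∩ Y = ∅) ∪
      (Finset.image₂ (· ∪ ·) (copyT0 0) (copyT0 2)).filter (fun A => A ∩ Y = ∅) ∪
      (Finset.image₂ (· ∪ ·) (copyT0 1) (copyT0 2)).filter (fun A => A ∩ Y = ∅) := by
    rw [F17, Finset.filter_union, Finset.filter_union]
  have hdisj1 : Disjoint
      ((Finset.image₂ (· ∪ ·) (copyT0 0) (copyT0 1)).filter (fun A => A ∩ Y = ∅))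
      ((Finset.image₂ (· ∪ ·) (copyT0 0) (copyT0 2)).filter (fun A => A ∩ Y = ∅)) := by
    rw [Finset.disjoint_left]
    intro A hA hA'
    have e1 := snd_image A (Finset.mem_filter.1 hA).1
    have e2 := snd_image A (Finset.mem_filter.1 hA').1
    rw [e1] at e2
    exact absurd e2 (by decide)
  have hdisj2 : Disjoint
      ((Finset.image₂ (· ∪ ·) (copyT0 0) (copyT0 1)).filter (fun A => A ∩ Y = ∅) ∪
       (Finset.image₂ (· ∪ ·) (copyT0 0) (copyT0 2)).filter (fun A => A ∩ Y = ∅))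
      ((Finset.image₂ (· ∪ ·) (copyT0 1) (copyT0 2)).filter (fun A => A ∩ Y = ∅)) := by
    rw [Finset.disjoint_union_left]
    constructor <;> rw [Finset.disjoint_left] <;> intro A hA hA' <;>
      [skip; skip] <;>
      · have e1 := snd_image A (Finset.mem_filter.1 hA).1
        have e2 := snd_image A (Finset.mem_filter.1 hA').1
        rw [e1] at e2
        exact absurd e2 (by decide)
  have hcardsum : (F17.filter (fun A => A ∩ Y = ∅)).card =
      ((Finset.image₂ (· ∪ ·) (copyT0 0) (copyT0 1)).filter (fun A => A ∩ Y = ∅)).card +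
      ((Finset.image₂ (· ∪ ·) (copyT0 0) (copyT0 2)).filter (fun A => A ∩ Y = ∅)).card +
      ((Finset.image₂ (· ∪ ·) (copyT0 1) (copyT0 2)).filter (fun A => A ∩ Y = ∅)).card := by
    rw [hsplit, Finset.card_union_of_disjoint hdisj2, Finset.card_union_of_disjoint hdisj1]
  have hb0 : g (Z 0).card ≤ m 0 := gbound (Z 0)
  have hb1 : g (Z 1).card ≤ m 1 := gbound (Z 1)
  have hb2 : g (Z 2).card ≤ m 2 := gbound (Z 2)
  have hp01 := pairBound Y (i := 0) (j := 1) (by decide)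
  have hp02 := pairBound Y (i := 0) (j := 2) (by decide)
  have hp12 := pairBound Y (i := 1) (j := 2) (by decide)
  have harith := arith _ _ _ (m 0) (m 1) (m 2) hsum hb0 hb1 hb2
  rw [hcardsum]
  calc (20:ℕ) ≤ m 0 * m 1 + m 0 * m 2 + m 1 * m 2 := harith
    _ ≤ _ := by
        apply add_le_add (add_le_add _ _) _ <;> assumption
end
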